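/- Let δ̃L₁₁(z) = [[1,0,0,z],[0,-z,-1,0],[0,1,-z,0],[-z,0,0,1]], δ̃L₁₂(z) = [[0,z,1,0],[1,0,0,z],[z,0,0,-1],[0,1,-z,0]], δ̃L₂₁(z) = [[0,z,1,0],[-1,0,0,-z],[-z,0,0,1],[0,1,-z,0]], δ̃L₂₂(z) = [[1,0,0,z],[0,z,1,0],[0,-1,z,0],[-z,0,0,1]] (the coproduct matrices of the fundamental representation in the alternative parametrisation). Then for every z ∈ ℂ, conjugation by M block-diagonalises all four simultaneously: M·δ̃Lᵢⱼ(z)·M⁻¹ is the block-diagonal matrix diag(Uᵢⱼ(z), Dᵢⱼ(z)) with 2×2 blocks U₁₁ = (1−iz)·[[1,0],[0,−i]], D₁₁ = i(1+iz)·[[1,0],[0,−i]]; U₂₂ = (1−iz)·[[1,0],[0,i]], D₂₂ = i(1+iz)·[[−1,0],[0,−i]]; U₁₂ = (1−iz)·[[0,i],[1,0]], D₁₂ = i(1+iz)·[[0,i],[1,0]]; U₂₁ = (1−iz)·[[0,i],[−1,0]], D₂₁ = i(1+iz)·[[0,−i],[1,0]]. -/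
import Mathlib


noncomputable section

open Matrix Complex

/-- The diagonaliser `M`. -/
def Mdiag : Matrix (Fin 4) (Fin 4) ℂ :=
  (Real.sqrt 2 : ℂ)⁻¹ • !![1, 0, 0, I;
                           0, 1, -I, 0;
                           0, -I, 1, 0;
                           I, 0, 0, 1]

/-- The block-diagonal 4×4 matrix `diag(U, D)` built from two 2×2 blocks. -/
def blockDiag (U D : Matrix (Fin 2) (Fin 2) ℂ) : Matrix (Fin 4) (Fin 4) ℂ :=
  Matrix.reindex finSumFinEquiv finSumFinEquiv (Matrix.fromBlocks U 0 0 D)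

/-- Coproduct matrix `δ̃L₁₁(z)` of the fundamental representation. -/
def dL11 (z : ℂ) : Matrix (Fin 4) (Fin 4) ℂ :=
  !![1, 0, 0, z;  0, -z, -1, 0;  0, 1, -z, 0;  -z, 0, 0, 1]

/-- Coproduct matrix `δ̃L₁₂(z)` of the fundamental representation. -/
def dL12 (z : ℂ) : Matrix (Fin 4) (Fin 4) ℂ :=
  !![0, z, 1, 0;  1, 0, 0, z;  z, 0, 0, -1;  0, 1, -z, 0]

/-- Coproduct matrix `δ̃L₂₁(z)` of the fundamental representation. -/
def dL21 (z : ℂ) : Matrix (Fin 4) (Fin 4) ℂ :=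
  !![0, z, 1, 0;  -1, 0, 0, -z;  -z, 0, 0, 1;  0, 1, -z, 0]

/-- Coproduct matrix `δ̃L₂₂(z)` of the fundamental representation. -/
def dL22 (z : ℂ) : Matrix (Fin 4) (Fin 4) ℂ :=
  !![1, 0, 0, z;  0, z, 1, 0;  0, -1, z, 0;  -z, 0, 0, 1]

/-- Explicit inverse of `Mdiag`. -/
def Minv : Matrix (Fin 4) (Fin 4) ℂ :=
  (Real.sqrt 2 : ℂ)⁻¹ • !![1, 0, 0, -I;
                           0, 1, I, 0;
                           0, I, 1, 0;
                           -I, 0, 0, 1]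

lemma hsq : ((Real.sqrt 2 : ℝ) : ℂ) ^ 2 = 2 := by
  norm_cast
  exact Real.sq_sqrt (by norm_num)

lemma hMinv : Mdiag⁻¹ = Minv := by
  apply inv_eq_right_inv
  ext i j
  fin_cases i <;> fin_cases j <;>
    simp [Mdiag, Minv, Matrix.mul_apply, Fin.sum_univ_four] <;>
    ring_nf <;> simp [hsq] <;> ring_nf

lemma blockDiag_eq (U D : Matrix (Fin 2) (Fin 2) ℂ) :
    blockDiag U D = !![U 0 0, U 0 1, 0, 0;
                       U 1 0, U 1 1, 0, 0;
                       0, 0, D 0 0, D 0 1;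
                       0, 0, D 1 0, D 1 1] := by
  ext i j
  fin_cases i <;> fin_cases j <;>
    simp [_root_.blockDiag, Matrix.reindex_apply, Matrix.submatrix_apply,
      finSumFinEquiv, Fin.addCases, Matrix.fromBlocks, Fin.subNat, Fin.castLT,
      Matrix.vecHead, Matrix.vecTail] <;>
    norm_num [show ((3:Fin 4):ℕ) = 3 from rfl]

set_option linter.unnecessarySeqFocus false

set_option maxHeartbeats 1000000 in
lemma aux11 (z : ℂ) : Mdiag * dL11 z * Minv =
    blockDiag ((1 - I*z) • !![1, 0; 0, -I]) ((I * (1 + I*z)) • !![1, 0; 0, -I]) := by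
  rw [blockDiag_eq]
  ext i j
  fin_cases i <;> fin_cases j <;>
    simp [Mdiag, Minv, dL11, Matrix.mul_apply, Fin.sum_univ_four] <;>
    ring_nf <;>
    simp [hsq, Complex.ext_iff, Matrix.vecHead, Matrix.vecTail, pow_succ, Complex.I_sq] <;>
    ring_nf <;> norm_num [show I^3 = -I by rw [pow_succ, I_sq]; ring, Complex.ext_iff] <;> ring

set_option maxHeartbeats 1000000 in
lemma aux22 (z : ℂ) : Mdiag * dL22 z * Minv =
    blockDiag ((1 - I*z) • !![1, 0; 0, I]) ((I * (1 + I*z)) • !![-1, 0; 0, -I]) := by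
  rw [blockDiag_eq]
  ext i j
  fin_cases i <;> fin_cases j <;>
    simp [Mdiag, Minv, dL22, Matrix.mul_apply, Fin.sum_univ_four] <;>
    ring_nf <;>
    simp [hsq, Complex.ext_iff, Matrix.vecHead, Matrix.vecTail, pow_succ, Complex.I_sq] <;>
    ring_nf <;> norm_num [show I^3 = -I by rw [pow_succ, I_sq]; ring, Complex.ext_iff] <;> ring

set_option maxHeartbeats 1000000 in
lemma aux12 (z : ℂ) : Mdiag * dL12 z * Minv =
    blockDiag ((1 - I*z) • !![0, I; 1, 0]) ((I * (1 + I*z)) • !![0, I; 1, 0]) := by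
  rw [blockDiag_eq]
  ext i j
  fin_cases i <;> fin_cases j <;>
    simp [Mdiag, Minv, dL12, Matrix.mul_apply, Fin.sum_univ_four] <;>
    ring_nf <;>
    simp [hsq, Complex.ext_iff, Matrix.vecHead, Matrix.vecTail, pow_succ, Complex.I_sq] <;>
    ring_nf <;> norm_num [show I^3 = -I by rw [pow_succ, I_sq]; ring, Complex.ext_iff] <;> ring

set_option maxHeartbeats 1000000 in
lemma aux21 (z : ℂ) : Mdiag * dL21 z * Minv =
    blockDiag ((1 - I*z) • !![0, I; -1, 0]) ((I * (1 + I*z)) • !![0, -I; 1, 0]) := by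
  rw [blockDiag_eq]
  ext i j
  fin_cases i <;> fin_cases j <;>
    simp [Mdiag, Minv, dL21, Matrix.mul_apply, Fin.sum_univ_four] <;>
    ring_nf <;>
    simp [hsq, Complex.ext_iff, Matrix.vecHead, Matrix.vecTail, pow_succ, Complex.I_sq] <;>
    ring_nf <;> norm_num [show I^3 = -I by rw [pow_succ, I_sq]; ring, Complex.ext_iff] <;> ring

/-- Conjugation by `M` simultaneously block-diagonalises the four coproduct matrices
`δ̃Lᵢⱼ(z)`, with the indicated 2×2 blocks `Uᵢⱼ(z)` and `Dᵢⱼ(z)`. -/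
theorem Mdiag_blockdiagonalises_coproduct (z : ℂ) :
    Mdiag * dL11 z * Mdiag⁻¹ =
      blockDiag ((1 - I*z) • !![1, 0; 0, -I]) ((I * (1 + I*z)) • !![1, 0; 0, -I]) ∧
    Mdiag * dL22 z * Mdiag⁻¹ =
      blockDiag ((1 - I*z) • !![1, 0; 0, I]) ((I * (1 + I*z)) • !![-1, 0; 0, -I]) ∧
    Mdiag * dL12 z * Mdiag⁻¹ =
      blockDiag ((1 - I*z) • !![0, I; 1, 0]) ((I * (1 + I*z)) • !![0, I; 1, 0]) ∧
    Mdiag * dL21 z * Mdiag⁻¹ =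
      blockDiag ((1 - I*z) • !![0, I; -1, 0]) ((I * (1 + I*z)) • !![0, -I; 1, 0]) := by
  rw [hMinv]
  exact ⟨aux11 z, aux22 z, aux12 z, aux21 z⟩
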